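/- arXiv:1310.8225 — 2 statements merged into one kernel-verified Lean document; each statement's English description precedes it below -/
import Mathlib

section
/- If a₀, a₁, c₀, c₁, m ∈ ℝ and c ∈ ℂ satisfy a₀ - |a₁| ≥ |c₀| + |c₁| + m·|c| with m ≥ 0, then for all α₁, α₂, α₃, α₄ ∈ ℂ: |α₁|²(a₀+a₁) + |α₂|²(a₀-a₁) + |α₃|²(a₀+a₁) + |α₄|²(a₀-a₁) ≥ 2·Re(α₁*·α₃·(c₀+c₁) + α₂*·α₄·(c₀-c₁) + (α₁*·α₄ - α₂*·α₃)·m·c), where α* denotes complex conjugation. -/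
theorem stmt0 (a0 a1 c0 c1 m : ℝ) (c : ℂ) (hm : 0 ≤ m)
    (h : a0 - |a1| ≥ |c0| + |c1| + m * ‖c‖) :
    ∀ α1 α2 α3 α4 : ℂ,
      ‖α1‖ ^ 2 * (a0 + a1) + ‖α2‖ ^ 2 * (a0 - a1) +
        ‖α3‖ ^ 2 * (a0 + a1) + ‖α4‖ ^ 2 * (a0 - a1) ≥
      2 * ((starRingEnd ℂ) α1 * α3 * ((c0 + c1 : ℝ) : ℂ) +
           (starRingEnd ℂ) α2 * α4 * ((c0 - c1 : ℝ) : ℂ) +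
           ((starRingEnd ℂ) α1 * α4 - (starRingEnd ℂ) α2 * α3) * ((m : ℂ) * c)).re := by
  intro α1 α2 α3 α4
  set r1 := ‖α1‖ with hr1
  set r2 := ‖α2‖ with hr2
  set r3 := ‖α3‖ with hr3
  set r4 := ‖α4‖ with hr4
  have hb1 : ((starRingEnd ℂ) α1 * α3 * ((c0 + c1 : ℝ) : ℂ)).re ≤ r1 * r3 * |c0 + c1| := by
    calc ((starRingEnd ℂ) α1 * α3 * ((c0 + c1 : ℝ) : ℂ)).re
        ≤ ‖((starRingEnd ℂ) α1 * α3 * ((c0 + c1 : ℝ) : ℂ))‖ := Complex.re_le_norm _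
      _ = r1 * r3 * |c0 + c1| := by
          simp [map_mul, Complex.norm_conj, ← Complex.ofReal_add, ← Complex.ofReal_sub, Complex.norm_real, hr1, hr2, hr3, hr4]
  have hb2 : ((starRingEnd ℂ) α2 * α4 * ((c0 - c1 : ℝ) : ℂ)).re ≤ r2 * r4 * |c0 - c1| := by
    calc ((starRingEnd ℂ) α2 * α4 * ((c0 - c1 : ℝ) : ℂ)).re
        ≤ ‖((starRingEnd ℂ) α2 * α4 * ((c0 - c1 : ℝ) : ℂ))‖ := Complex.re_le_norm _
      _ = r2 * r4 * |c0 - c1| := by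
          simp [map_mul, Complex.norm_conj, ← Complex.ofReal_add, ← Complex.ofReal_sub, Complex.norm_real, hr1, hr2, hr3, hr4]
  have hb3 : (((starRingEnd ℂ) α1 * α4 - (starRingEnd ℂ) α2 * α3) * ((m : ℂ) * c)).re
      ≤ (r1 * r4 + r2 * r3) * (m * ‖c‖) := by
    calc (((starRingEnd ℂ) α1 * α4 - (starRingEnd ℂ) α2 * α3) * ((m : ℂ) * c)).re
        ≤ ‖(((starRingEnd ℂ) α1 * α4 - (starRingEnd ℂ) α2 * α3) * ((m : ℂ) * c))‖ :=
          Complex.re_le_norm _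
      _ = ‖((starRingEnd ℂ) α1 * α4 - (starRingEnd ℂ) α2 * α3)‖
            * (m * ‖c‖) := by
          simp [map_mul, abs_of_nonneg hm, Complex.norm_real]
      _ ≤ (r1 * r4 + r2 * r3) * (m * ‖c‖) := by
          apply mul_le_mul_of_nonneg_right _ (by positivity)
          calc ‖((starRingEnd ℂ) α1 * α4 - (starRingEnd ℂ) α2 * α3)‖
              = ‖((starRingEnd ℂ) α1 * α4 + -((starRingEnd ℂ) α2 * α3))‖ := by
                rw [sub_eq_add_neg]
            _ ≤ ‖((starRingEnd ℂ) α1 * α4)‖ + ‖(-((starRingEnd ℂ) α2 * α3))‖ :=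
                norm_add_le _ _
            _ = ‖((starRingEnd ℂ) α1 * α4)‖ + ‖((starRingEnd ℂ) α2 * α3)‖ := by
                rw [norm_neg]
            _ = r1 * r4 + r2 * r3 := by simp [map_mul, Complex.norm_conj, hr1, hr2, hr3, hr4]
  have hre : (2 * ((starRingEnd ℂ) α1 * α3 * ((c0 + c1 : ℝ) : ℂ) +
           (starRingEnd ℂ) α2 * α4 * ((c0 - c1 : ℝ) : ℂ) +
           ((starRingEnd ℂ) α1 * α4 - (starRingEnd ℂ) α2 * α3) * ((m : ℂ) * c))).re
      = 2 * (((starRingEnd ℂ) α1 * α3 * ((c0 + c1 : ℝ) : ℂ)).re +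
          ((starRingEnd ℂ) α2 * α4 * ((c0 - c1 : ℝ) : ℂ)).re +
          (((starRingEnd ℂ) α1 * α4 - (starRingEnd ℂ) α2 * α3) * ((m : ℂ) * c)).re) := by
    simp [Complex.add_re, Complex.mul_re]
  have ha1 : -|a1| ≤ a1 := neg_abs_le a1
  have ha2 : a1 ≤ |a1| := le_abs_self a1
  have hc1 : |c0 + c1| ≤ |c0| + |c1| := abs_add_le _ _
  have hc2 : |c0 - c1| ≤ |c0| + |c1| := abs_sub _ _
  have hn1 : 0 ≤ r1 := norm_nonneg _
  have hn2 : 0 ≤ r2 := norm_nonneg _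
  have hn3 : 0 ≤ r3 := norm_nonneg _
  have hn4 : 0 ≤ r4 := norm_nonneg _
  have hcc : 0 ≤ ‖c‖ := norm_nonneg _
  have hc0 : 0 ≤ |c0| := abs_nonneg _
  have hc01 : 0 ≤ |c1| := abs_nonneg _
  rw [ge_iff_le, Complex.add_re, Complex.add_re]
  nlinarith [sq_nonneg (r1 - r3), sq_nonneg (r2 - r4), sq_nonneg (r1 - r4),
    sq_nonneg (r2 - r3), mul_nonneg (mul_nonneg hn1 hn3) (sub_nonneg.2 hc1),
    mul_nonneg (mul_nonneg hn2 hn4) (sub_nonneg.2 hc2),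
    mul_nonneg hm hcc, sq_nonneg r1, sq_nonneg r2, sq_nonneg r3, sq_nonneg r4, hb1, hb2, hb3]
end

section
/- Let λ₁, λ₂ > 0 with λ₁ + λ₂ = 1, let φ₁, φ₂ > 0, Θ ∈ (0, π), θ_c ∈ ℝ, d > 0, and ε ∈ {+1, -1}. Define the 4×4 complex matrix A = d·(csc Θ)² · M where M has entries: M₁₁ = √(λ₂/λ₁)·(φ₂/φ₁), M₂₂ = √(λ₁/λ₂)·(φ₂/φ₁), M₃₃ = √(λ₂/λ₁)·(φ₁/φ₂), M₄₄ = √(λ₁/λ₂)·(φ₁/φ₂), M₁₃ = √(λ₂/λ₁)·cos Θ·exp(i·θ_c), M₂₄ = √(λ₁/λ₂)·cos Θ·exp(i·θ_c), M₁₄ = ε·sin Θ·exp(i·θ_c), M₂₃ = -ε·sin Θ·exp(i·θ_c), with M Hermitian (lower entries conjugates) and M₁₂ = M₃₄ = 0. Then A is positive semi-definite. -/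
/-!
Up to the factor `d csc² Θ ≥ 0`, the matrix has the block form `[[D, C], [Cᴴ, Cᴴ D⁻¹ C]]` with
`D` positive diagonal: the Schur complement vanishes because `√(λ₂/λ₁) √(λ₁/λ₂) = 1` and
`cos² Θ + sin² Θ = 1` (hence also the zero determinant). So it equals `Gᴴ D G` with `G = [I, D⁻¹ C]`,
a nonnegative combination of the two rank-one matrices built from the rows of `G`.
-/

open Complex Matrix
open scoped ComplexOrder ComplexConjugate

/-- The paper's matrix `M` with `a = √(λ₂/λ₁)`, `b = √(λ₁/λ₂)`, `r = φ₂/φ₁`, `r' = φ₁/φ₂`,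
`c = cos Θ`, `s = sin Θ` and `z = exp (i θ_c)`. -/
def causalMatrix (a b r r' c s ε : ℝ) (z : ℂ) : Matrix (Fin 4) (Fin 4) ℂ :=
  !![((a * r : ℝ) : ℂ), 0, ((a * c : ℝ) : ℂ) * z, ((ε * s : ℝ) : ℂ) * z;
     0, ((b * r : ℝ) : ℂ), (((-ε) * s : ℝ) : ℂ) * z, ((b * c : ℝ) : ℂ) * z;
     ((a * c : ℝ) : ℂ) * conj z, (((-ε) * s : ℝ) : ℂ) * conj z, ((a * r' : ℝ) : ℂ), 0;
     ((ε * s : ℝ) : ℂ) * conj z, ((b * c : ℝ) : ℂ) * conj z, 0, ((b * r' : ℝ) : ℂ)]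

theorem causalMatrix_eq_add_vecMulVec {a b r r' c s ε : ℝ} {z : ℂ} (hab : a * b = 1)
    (hr : r * r' = 1) (hcs : c ^ 2 + s ^ 2 = 1) (hε : ε ^ 2 = 1) (hz : z * conj z = 1) :
    causalMatrix a b r r' c s ε z =
      (a * r) • vecMulVec ![1, 0, (c * r' : ℂ) * conj z, (ε * b * s * r' : ℂ) * conj z]
          (star ![1, 0, (c * r' : ℂ) * conj z, (ε * b * s * r' : ℂ) * conj z]) +
      (b * r) • vecMulVec ![0, 1, (-(ε * a * s * r') : ℂ) * conj z, (c * r' : ℂ) * conj z]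
          (star ![0, 1, (-(ε * a * s * r') : ℂ) * conj z, (c * r' : ℂ) * conj z]) := by
  have hab' : (a * b : ℂ) = 1 := by exact_mod_cast hab
  have hr' : (r * r' : ℂ) = 1 := by exact_mod_cast hr
  have hcs' : (c ^ 2 + s ^ 2 : ℂ) = 1 := by exact_mod_cast hcs
  have hε' : (ε ^ 2 : ℂ) = 1 := by exact_mod_cast hε
  ext i j
  simp only [Matrix.add_apply, Matrix.smul_apply, vecMulVec_apply, Pi.star_apply]
  fin_cases i <;> fin_cases j <;> simp [causalMatrix, Complex.real_smul] <;> grind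

theorem posSemidef_causalMatrix {a b r r' c s ε : ℝ} {z : ℂ} (ha : 0 ≤ a) (hb : 0 ≤ b)
    (hr₀ : 0 ≤ r) (hab : a * b = 1) (hr : r * r' = 1) (hcs : c ^ 2 + s ^ 2 = 1) (hε : ε ^ 2 = 1)
    (hz : z * conj z = 1) : (causalMatrix a b r r' c s ε z).PosSemidef := by
  rw [causalMatrix_eq_add_vecMulVec hab hr hcs hε hz]
  exact ((posSemidef_vecMulVec_self_star _).smul (mul_nonneg ha hr₀)).add
    ((posSemidef_vecMulVec_self_star _).smul (mul_nonneg hb hr₀))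

theorem stmt1_general (lam1 lam2 phi1 phi2 Θ θc d ε : ℝ)
    (h1 : 0 < lam1) (h2 : 0 < lam2)
    (hphi1 : 0 < phi1) (hphi2 : 0 < phi2)
    (hd : 0 < d) (hε : ε = 1 ∨ ε = -1) :
    (((d * (Real.sin Θ)⁻¹ ^ 2 : ℝ) : ℂ) •
      (!![((Real.sqrt (lam2 / lam1) * (phi2 / phi1) : ℝ) : ℂ), 0,
            ((Real.sqrt (lam2 / lam1) * Real.cos Θ : ℝ) : ℂ) * Complex.exp (Complex.I * (θc : ℂ)),
            ((ε * Real.sin Θ : ℝ) : ℂ) * Complex.exp (Complex.I * (θc : ℂ));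
          0, ((Real.sqrt (lam1 / lam2) * (phi2 / phi1) : ℝ) : ℂ),
            (((-ε) * Real.sin Θ : ℝ) : ℂ) * Complex.exp (Complex.I * (θc : ℂ)),
            ((Real.sqrt (lam1 / lam2) * Real.cos Θ : ℝ) : ℂ) * Complex.exp (Complex.I * (θc : ℂ));
          ((Real.sqrt (lam2 / lam1) * Real.cos Θ : ℝ) : ℂ) * Complex.exp (-(Complex.I * (θc : ℂ))),
            (((-ε) * Real.sin Θ : ℝ) : ℂ) * Complex.exp (-(Complex.I * (θc : ℂ))),
            ((Real.sqrt (lam2 / lam1) * (phi1 / phi2) : ℝ) : ℂ), 0;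
          ((ε * Real.sin Θ : ℝ) : ℂ) * Complex.exp (-(Complex.I * (θc : ℂ))),
            ((Real.sqrt (lam1 / lam2) * Real.cos Θ : ℝ) : ℂ) * Complex.exp (-(Complex.I * (θc : ℂ))),
            0, ((Real.sqrt (lam1 / lam2) * (phi1 / phi2) : ℝ) : ℂ)] :
        Matrix (Fin 4) (Fin 4) ℂ)).PosSemidef := by
  have hexp : Complex.exp (-(Complex.I * θc)) = conj (Complex.exp (Complex.I * θc)) := by
    rw [← Complex.exp_conj, map_mul, conj_I, conj_ofReal, neg_mul]
  have hsqrt : Real.sqrt (lam2 / lam1) * Real.sqrt (lam1 / lam2) = 1 := by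
    rw [← Real.sqrt_mul (by positivity), div_mul_div_comm, mul_comm lam2, div_self (by positivity),
      Real.sqrt_one]
  have hphi : phi2 / phi1 * (phi1 / phi2) = 1 := by field_simp
  have hε2 : ε ^ 2 = 1 := by rcases hε with rfl | rfl <;> norm_num
  have hz : Complex.exp (Complex.I * θc) * conj (Complex.exp (Complex.I * θc)) = 1 := by
    rw [← hexp, ← Complex.exp_add, add_neg_cancel, Complex.exp_zero]
  rw [hexp]
  exact (posSemidef_causalMatrix (Real.sqrt_nonneg _) (Real.sqrt_nonneg _) (by positivity) hsqrt
    hphi (Real.cos_sq_add_sin_sq Θ) hε2 hz).smul (Complex.zero_le_real.mpr (by positivity))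

theorem stmt1 (lam1 lam2 phi1 phi2 Θ θc d ε : ℝ)
    (h1 : 0 < lam1) (h2 : 0 < lam2) (hsum : lam1 + lam2 = 1)
    (hphi1 : 0 < phi1) (hphi2 : 0 < phi2)
    (hΘ : Θ ∈ Set.Ioo 0 Real.pi) (hd : 0 < d) (hε : ε = 1 ∨ ε = -1) :
    (((d * (Real.sin Θ)⁻¹ ^ 2 : ℝ) : ℂ) •
      (!![((Real.sqrt (lam2 / lam1) * (phi2 / phi1) : ℝ) : ℂ), 0,
            ((Real.sqrt (lam2 / lam1) * Real.cos Θ : ℝ) : ℂ) * Complex.exp (Complex.I * (θc : ℂ)),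
            ((ε * Real.sin Θ : ℝ) : ℂ) * Complex.exp (Complex.I * (θc : ℂ));
          0, ((Real.sqrt (lam1 / lam2) * (phi2 / phi1) : ℝ) : ℂ),
            (((-ε) * Real.sin Θ : ℝ) : ℂ) * Complex.exp (Complex.I * (θc : ℂ)),
            ((Real.sqrt (lam1 / lam2) * Real.cos Θ : ℝ) : ℂ) * Complex.exp (Complex.I * (θc : ℂ));
          ((Real.sqrt (lam2 / lam1) * Real.cos Θ : ℝ) : ℂ) * Complex.exp (-(Complex.I * (θc : ℂ))),
            (((-ε) * Real.sin Θ : ℝ) : ℂ) * Complex.exp (-(Complex.I * (θc : ℂ))),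
            ((Real.sqrt (lam2 / lam1) * (phi1 / phi2) : ℝ) : ℂ), 0;
          ((ε * Real.sin Θ : ℝ) : ℂ) * Complex.exp (-(Complex.I * (θc : ℂ))),
            ((Real.sqrt (lam1 / lam2) * Real.cos Θ : ℝ) : ℂ) * Complex.exp (-(Complex.I * (θc : ℂ))),
            0, ((Real.sqrt (lam1 / lam2) * (phi1 / phi2) : ℝ) : ℂ)] :
        Matrix (Fin 4) (Fin 4) ℂ)).PosSemidef :=
  stmt1_general lam1 lam2 phi1 phi2 Θ θc d ε h1 h2 hphi1 hphi2 hd hε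
end
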